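/- arXiv:math/0312108 — 4 statements merged into one kernel-verified Lean document; each statement's English description precedes it below -/
import Mathlib

section
/- Let H be an infinite-dimensional Hilbert space, let V be a one-dimensional subspace of H spanned by a nonzero vector φ, and let E be a dense subspace of H. Then the orthogonal complement of the set E ∩ V^⊥ (taken in H) equals V. -/
/-!
If some `e ∈ E` has `f e ≠ 0`, the continuous projection `x ↦ x - (f x / f e) • e` onto `ker f`
maps the dense subspace `E` into `E ∩ ker f` and fixes `ker f` pointwise, so `E ∩ ker f` is dense
in `ker f`; otherwise `E ⊆ ker f` already. Applied to `f = ⟪φ, ·⟫`, the subspace `E ∩ V^⊥` is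
dense in `V^⊥`, so `(E ∩ V^⊥)^⊥ = V^⊥⊥ = V`.
-/

open Submodule

theorem ContinuousLinearMap.ker_le_topologicalClosure_inf_ker {𝕜 M : Type*} [Field 𝕜]
    [TopologicalSpace 𝕜] [TopologicalSpace M] [AddCommGroup M] [IsTopologicalAddGroup M]
    [Module 𝕜 M] [ContinuousSMul 𝕜 M]
    (f : M →L[𝕜] 𝕜) {E : Submodule 𝕜 M} (hE : Dense (E : Set M)) :
    f.ker ≤ (E ⊓ f.ker).topologicalClosure := by
  by_cases hEf : ∃ e ∈ E, f e ≠ 0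
  · obtain ⟨e, heE, hfe⟩ := hEf
    set P : M →L[𝕜] M := ContinuousLinearMap.id 𝕜 M - (f e)⁻¹ • f.smulRight e
    have hP_apply (x : M) : P x = x - ((f e)⁻¹ * f x) • e := by simp [P, mul_smul]
    have hP_ker (x : M) : f (P x) = 0 := by
      rw [hP_apply, map_sub, map_smul, smul_eq_mul, mul_right_comm, inv_mul_cancel₀ hfe, one_mul,
        sub_self]
    have hP_maps : Set.MapsTo P E (E ⊓ f.ker) := fun y hy =>
      ⟨by rw [hP_apply]; exact E.sub_mem hy (E.smul_mem _ heE), hP_ker y⟩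
    intro x hx
    have hfx : f x = 0 := hx
    have hPx : P x = x := by rw [hP_apply, hfx, mul_zero, zero_smul, sub_zero]
    rw [← hPx]
    exact map_mem_closure P.continuous (hE.closure_eq ▸ Set.mem_univ x) hP_maps
  · push Not at hEf
    rw [inf_eq_left.2 hEf, dense_iff_topologicalClosure_eq_top.1 hE]
    exact le_top

theorem Submodule.orthogonal_span_singleton_eq_ker_innerSL {𝕜 H : Type*} [RCLike 𝕜]
    [NormedAddCommGroup H] [InnerProductSpace 𝕜 H] (φ : H) :
    (𝕜 ∙ φ)ᗮ = (innerSL 𝕜 φ).ker := by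
  ext v
  simp [mem_orthogonal_singleton_iff_inner_right]

theorem Dense.topologicalClosure_inf_orthogonal_span_singleton {𝕜 H : Type*} [RCLike 𝕜]
    [NormedAddCommGroup H] [InnerProductSpace 𝕜 H] {E : Submodule 𝕜 H} (hE : Dense (E : Set H))
    (φ : H) : (E ⊓ (𝕜 ∙ φ)ᗮ).topologicalClosure = (𝕜 ∙ φ)ᗮ := by
  refine le_antisymm (topologicalClosure_minimal _ inf_le_right (isClosed_orthogonal _)) ?_
  rw [orthogonal_span_singleton_eq_ker_innerSL]
  exact (innerSL 𝕜 φ).ker_le_topologicalClosure_inf_ker hE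

theorem stmt0_general {H : Type*} [NormedAddCommGroup H] [InnerProductSpace ℂ H]
    (φ : H) (E : Submodule ℂ H) (hE : Dense (E : Set H)) :
    (E ⊓ (ℂ ∙ φ)ᗮ)ᗮ = (ℂ ∙ φ) := by
  calc (E ⊓ (ℂ ∙ φ)ᗮ)ᗮ = (E ⊓ (ℂ ∙ φ)ᗮ).topologicalClosureᗮ := (orthogonal_closure _).symm
    _ = (ℂ ∙ φ)ᗮᗮ := by rw [hE.topologicalClosure_inf_orthogonal_span_singleton]
    _ = ℂ ∙ φ := orthogonal_orthogonal _

/-- If `H` is an infinite-dimensional Hilbert space, `V = span{φ}` with `φ ≠ 0`,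
and `E ⊆ H` is a dense subspace, then `(E ∩ V^⊥)^⊥ = V`. -/
theorem stmt0 {H : Type*} [NormedAddCommGroup H] [InnerProductSpace ℂ H] [CompleteSpace H]
    (hinf : ¬ FiniteDimensional ℂ H)
    (φ : H) (hφ : φ ≠ 0) (E : Submodule ℂ H) (hE : Dense (E : Set H)) :
    (E ⊓ (ℂ ∙ φ)ᗮ)ᗮ = (ℂ ∙ φ) :=
  stmt0_general φ E hE
end

section
/- Let H be an infinite-dimensional Hilbert space, let V ⊆ H be a finite-dimensional subspace, and let E ⊆ H be a dense linear subspace. Then E ∩ V^⊥ is nonempty (contains nonzero vectors unless V^⊥ = 0) and E ∩ V^⊥ is dense in V^⊥. -/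
/-!
Let `P` be the orthogonal projection onto `V`. Since `P` maps the dense subspace `E` onto a dense,
hence (being finite-dimensional) closed, subspace of `V`, it maps `E` onto `V`; so `P` has a linear
right inverse `s : V → E`, automatically continuous. The continuous map `x ↦ x - s (P x)` sends `E`
into `E ⊓ Vᗮ` and fixes `Vᗮ`, so it carries the density of `E` in `H` to density of `E ⊓ Vᗮ`
in `Vᗮ`.
-/

namespace Submodule

variable {𝕜 X F : Type*} [NontriviallyNormedField 𝕜] [CompleteSpace 𝕜]
  [AddCommGroup X] [Module 𝕜 X] [TopologicalSpace X]
  [AddCommGroup F] [Module 𝕜 F] [TopologicalSpace F] [IsTopologicalAddGroup F]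
  [ContinuousSMul 𝕜 F] [T2Space F] [FiniteDimensional 𝕜 F]
  {E : Submodule 𝕜 X}

theorem map_eq_top_of_dense (hE : Dense (E : Set X)) (p : X →L[𝕜] F)
    (hp : Function.Surjective p) : E.map (p : X →ₗ[𝕜] F) = ⊤ := by
  have hdense : Dense (p '' E) := hp.denseRange.dense_image p.continuous hE
  have hclosed : IsClosed ((E.map (p : X →ₗ[𝕜] F) : Submodule 𝕜 F) : Set F) :=
    closed_of_finiteDimensional _
  refine SetLike.coe_injective ?_
  rw [top_coe, ← hclosed.closure_eq, map_coe, ContinuousLinearMap.coe_coe]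
  exact hdense.closure_eq

theorem topologicalClosure_inf_ker_eq [IsTopologicalAddGroup X] [ContinuousSMul 𝕜 X]
    (hE : Dense (E : Set X)) (p : X →L[𝕜] F) (hp : Function.Surjective p) :
    (E ⊓ p.ker).topologicalClosure = p.ker := by
  have hrange : LinearMap.range ((p : X →ₗ[𝕜] F) ∘ₗ E.subtype) = ⊤ := by
    rw [LinearMap.range_comp, range_subtype, map_eq_top_of_dense hE p hp]
  obtain ⟨g, hg⟩ := ((p : X →ₗ[𝕜] F) ∘ₗ E.subtype).exists_rightInverse_of_surjective hrange
  have hpg (y : F) : p (g y) = y := LinearMap.congr_fun hg y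
  let s : F →ₗ[𝕜] X := E.subtype ∘ₗ g
  let f : X → X := fun x ↦ x - s (p x)
  have hf : Continuous f := continuous_id.sub (s.continuous_of_finiteDimensional.comp p.continuous)
  refine le_antisymm (topologicalClosure_minimal _ inf_le_right p.isClosed_ker) fun x hx ↦ ?_
  have hpx : p x = 0 := hx
  have hfx : f x = x := by simp [f, hpx]
  rw [← hfx]
  refine map_mem_closure hf (hE x) fun e he ↦ ⟨E.sub_mem he (g (p e)).2, ?_⟩
  simp [f, s, hpg]

end Submodule

theorem stmt1_general {H : Type*} [NormedAddCommGroup H] [InnerProductSpace ℂ H]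
    (V : Submodule ℂ H) [FiniteDimensional ℂ V]
    (E : Submodule ℂ H) (hE : Dense (E : Set H)) :
    (Vᗮ ≠ ⊥ → ∃ x ∈ E ⊓ Vᗮ, x ≠ 0) ∧ (E ⊓ Vᗮ).topologicalClosure = Vᗮ := by
  have hP : Function.Surjective V.orthogonalProjectionOnto := fun v ↦
    ⟨v, Submodule.orthogonalProjectionOnto_mem_subspace_eq_self v⟩
  have hclosure : (E ⊓ Vᗮ).topologicalClosure = Vᗮ := by
    simpa using Submodule.topologicalClosure_inf_ker_eq hE _ hP
  refine ⟨fun hne ↦ Submodule.exists_mem_ne_zero_of_ne_bot fun hbot ↦ hne ?_, hclosure⟩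
  rw [← hclosure, hbot]
  exact IsClosed.submodule_topologicalClosure_eq (by simp)

/-- If `H` is an infinite-dimensional Hilbert space, `V ⊆ H` a finite-dimensional subspace,
and `E ⊆ H` a dense linear subspace, then `E ∩ V^⊥` contains nonzero vectors unless `V^⊥ = 0`,
and `E ∩ V^⊥` is dense in `V^⊥`. -/
theorem stmt1 {H : Type*} [NormedAddCommGroup H] [InnerProductSpace ℂ H] [CompleteSpace H]
    (hinf : ¬ FiniteDimensional ℂ H)
    (V : Submodule ℂ H) [FiniteDimensional ℂ V]
    (E : Submodule ℂ H) (hE : Dense (E : Set H)) :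
    (Vᗮ ≠ ⊥ → ∃ x ∈ E ⊓ Vᗮ, x ≠ 0) ∧ (E ⊓ Vᗮ).topologicalClosure = Vᗮ :=
  stmt1_general V E hE
end

section
/- Under the hypotheses of the previous lemma, there exists ε ∈ (0, a] and a unique continuous family of bounded operators T(t) : H → V, t ∈ [0, ε], such that Q P_t (Id − T(t)) = 0 for all t ∈ [0, ε]; explicitly T(t) = R(t) Q P_t where R(t) is the inverse of Q P_t on V. -/
open Set Topology

/-!
For `t` near `0` the compression `S(t) = Q P_t|_V` of `P_t` to `V` is close to `S(0) = 1`,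
hence invertible: strong continuity of `t ↦ S(t)` is norm continuity because `V` is
finite-dimensional, and the units of a Banach algebra form an open set. Since
`Q P_t (x - T x) = Q P_t x - S(t) (T x)`, the equation `Q P_t (Id - T(t)) = 0` says exactly
`S(t) T(t) = Q P_t`, whose only solution is `T(t) = S(t)⁻¹ Q P_t`; it depends continuously
on `t` because inversion is continuous on units.
-/

theorem ContinuousWithinAt.exists_mapsTo_Icc {X : Type*} [TopologicalSpace X] {f : ℝ → X}
    {a b : ℝ} (hab : a < b) (hf : ContinuousWithinAt f (Icc a b) a) {U : Set X}
    (hU : IsOpen U) (hfa : f a ∈ U) : ∃ c, a < c ∧ c ≤ b ∧ MapsTo f (Icc a c) U := by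
  have hev : ∀ᶠ t in 𝓝[≥] a, f t ∈ U := by
    rw [← nhdsWithin_Icc_eq_nhdsGE hab]
    exact hf.eventually_mem (hU.mem_nhds hfa)
  obtain ⟨c, hac, hc⟩ := mem_nhdsGE_iff_exists_Icc_subset.mp hev
  exact ⟨min c b, lt_min hac hab, min_le_right c b,
    fun t ht => hc ⟨ht.1, ht.2.trans (min_le_left c b)⟩⟩

theorem ContinuousOn.ring_inverse {X R : Type*} [TopologicalSpace X] [NormedRing R]
    [HasSummableGeomSeries R] {f : X → R} {s : Set X} (hf : ContinuousOn f s)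
    (hunit : ∀ x ∈ s, IsUnit (f x)) : ContinuousOn (fun x => Ring.inverse (f x)) s := by
  intro x hx
  have hinv := NormedRing.inverse_continuousAt (hunit x hx).unit
  rw [IsUnit.unit_spec] at hinv
  exact hinv.comp_continuousWithinAt (hf x hx)

section Compression

variable {𝕜 E : Type*} [RCLike 𝕜] [NormedAddCommGroup E] [InnerProductSpace 𝕜 E]
  (K : Submodule 𝕜 E) [K.HasOrthogonalProjection]

noncomputable def compression (A : E →L[𝕜] E) : K →L[𝕜] K :=
  K.orthogonalProjectionOnto ∘L A ∘L K.subtypeL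

@[simp]
theorem compression_apply (A : E →L[𝕜] E) (v : K) :
    compression K A v = K.orthogonalProjectionOnto (A v) :=
  rfl

@[simp]
theorem compression_id : compression K (.id 𝕜 E) = 1 := by
  ext v
  simp [Submodule.orthogonalProjectionOnto_mem_subspace_eq_self]

theorem continuousOn_compression [FiniteDimensional 𝕜 K] {X : Type*} [TopologicalSpace X]
    {A : X → E →L[𝕜] E} {s : Set X} (hA : ∀ x, ContinuousOn (fun t => A t x) s) :
    ContinuousOn (fun t => compression K (A t)) s :=
  continuousOn_clm_apply.mpr fun v =>
    K.orthogonalProjectionOnto.continuous.comp_continuousOn (hA v)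

theorem forall_orthogonalProjectionOnto_apply_sub_eq_zero_iff {A : E →L[𝕜] E}
    (hA : IsUnit (compression K A)) (T : E →L[𝕜] K) :
    (∀ x, K.orthogonalProjectionOnto (A (x - T x)) = 0) ↔
      T = Ring.inverse (compression K A) ∘L K.orthogonalProjectionOnto ∘L A := by
  set S := compression K A
  have hsplit : ∀ x, K.orthogonalProjectionOnto (A (x - T x)) =
      K.orthogonalProjectionOnto (A x) - S (T x) := fun x => by simp [S]
  have hinv : Ring.inverse S ∘L S = 1 := Ring.inverse_mul_cancel S hA
  have hinv' : S ∘L Ring.inverse S = 1 := Ring.mul_inverse_cancel S hA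
  simp only [hsplit, sub_eq_zero]
  constructor
  · intro h
    have hST : S ∘L T = K.orthogonalProjectionOnto ∘L A := by ext1 x; exact (h x).symm
    rw [← hST, ← ContinuousLinearMap.comp_assoc, hinv]
    rfl
  · rintro rfl x
    change _ = (S ∘L Ring.inverse S) _
    rw [hinv']
    rfl

end Compression

theorem stmt3_general {H : Type*} [NormedAddCommGroup H] [InnerProductSpace ℂ H]
    (V : Submodule ℂ H) [FiniteDimensional ℂ V]
    (a : ℝ) (ha : 0 < a) (P : ℝ → H →L[ℂ] H)
    (hP0 : P 0 = ContinuousLinearMap.id ℂ H)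
    (hcont : ∀ x : H, ContinuousOn (fun t => P t x) (Icc (0 : ℝ) a)) :
    ∃ ε : ℝ, 0 < ε ∧ ε ≤ a ∧ ∃ T : ℝ → (H →L[ℂ] V),
      (∀ x : H, ContinuousOn (fun t => T t x) (Icc (0 : ℝ) ε)) ∧
      (∀ t ∈ Icc (0 : ℝ) ε, ∀ x : H,
        Submodule.orthogonalProjection V (P t (x - (T t x : H))) = 0) ∧
      (∀ T' : ℝ → (H →L[ℂ] V),
        (∀ x : H, ContinuousOn (fun t => T' t x) (Icc (0 : ℝ) ε)) →
        (∀ t ∈ Icc (0 : ℝ) ε, ∀ x : H,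
          Submodule.orthogonalProjection V (P t (x - (T' t x : H))) = 0) →
        ∀ t ∈ Icc (0 : ℝ) ε, T' t = T t) := by
  set S : ℝ → V →L[ℂ] V := fun t => compression V (P t)
  have hS : ContinuousOn S (Icc 0 a) := continuousOn_compression V hcont
  have hS0 : IsUnit (S 0) := by simp [S, hP0]
  obtain ⟨ε, hε, hεa, hunit⟩ :=
    (hS 0 ⟨le_rfl, ha.le⟩).exists_mapsTo_Icc ha (Units.isOpen (R := V →L[ℂ] V)) hS0
  have hsub : Icc 0 ε ⊆ Icc 0 a := Icc_subset_Icc_right hεa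
  have hchar (t : ℝ) (ht : t ∈ Icc 0 ε) :=
    forall_orthogonalProjectionOnto_apply_sub_eq_zero_iff V (hunit ht)
  refine ⟨ε, hε, hεa, fun t => Ring.inverse (S t) ∘L V.orthogonalProjectionOnto ∘L P t,
    fun x => ?_, fun t ht => (hchar t ht _).mpr rfl,
    fun T' _ hT' t ht => (hchar t ht _).mp (hT' t ht)⟩
  exact ((hS.mono hsub).ring_inverse hunit).clm_apply
    (V.orthogonalProjectionOnto.continuous.comp_continuousOn ((hcont x).mono hsub))

/-- With `H` a Hilbert space, `V` a finite-dimensional subspace, `Q` the orthogonal projection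
onto `V`, and `(P_t)_{t∈[0,a]}` a strongly continuous family of bounded projections with
`P_0 = Id`, there exist `ε ∈ (0, a]` and a unique strongly continuous family of bounded
operators `T(t) : H → V`, `t ∈ [0, ε]`, such that `Q P_t (Id − T(t)) = 0`. -/
theorem stmt3 {H : Type*} [NormedAddCommGroup H] [InnerProductSpace ℂ H] [CompleteSpace H]
    (V : Submodule ℂ H) [FiniteDimensional ℂ V]
    (a : ℝ) (ha : 0 < a) (P : ℝ → H →L[ℂ] H)
    (hP0 : P 0 = ContinuousLinearMap.id ℂ H)
    (hproj : ∀ t ∈ Icc (0 : ℝ) a, (P t) ∘L (P t) = P t)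
    (hcont : ∀ x : H, ContinuousOn (fun t => P t x) (Icc (0 : ℝ) a)) :
    ∃ ε : ℝ, 0 < ε ∧ ε ≤ a ∧ ∃ T : ℝ → (H →L[ℂ] V),
      (∀ x : H, ContinuousOn (fun t => T t x) (Icc (0 : ℝ) ε)) ∧
      (∀ t ∈ Icc (0 : ℝ) ε, ∀ x : H,
        Submodule.orthogonalProjection V (P t (x - (T t x : H))) = 0) ∧
      (∀ T' : ℝ → (H →L[ℂ] V),
        (∀ x : H, ContinuousOn (fun t => T' t x) (Icc (0 : ℝ) ε)) →
        (∀ t ∈ Icc (0 : ℝ) ε, ∀ x : H,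
          Submodule.orthogonalProjection V (P t (x - (T' t x : H))) = 0) →
        ∀ t ∈ Icc (0 : ℝ) ε, T' t = T t) :=
  stmt3_general V a ha P hP0 hcont
end

section
/- Let p(x', t', y, ξ, τ, η) = −ξτ − x' t' h(x' t', y, η) where h(r, y, η) = Σ h^{ij}(r, y) η_i η_j is a smooth family of positive-definite quadratic forms in η. Let H_p be the Hamilton vector field of p and φ(x', t') = x' + t'. Then H_p² φ = −(x' + t')[h(x't', y, η) + x' t' h₁(x't', y, η)], where h₁ denotes ∂h/∂r. Consequently, for x', t' in a sufficiently small neighborhood of 0 with x', t' ≥ 0, one has −φ · H_p² φ ≥ (1/2) φ² h(x't', y, η). -/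
open Set Filter Topology

/-! Since `H_p φ = −ξ − τ`, `H_p² φ = ∂_{x'} p + ∂_{t'} p`, which the product and chain rules give.
For the estimate, `−φ H_p² φ − ½ φ² h = ½ φ² (h + 2 r h₁)` with `r = x' t'`, so it suffices that
`h + 2 r h₁ ≥ 0` for small `r`. Both terms are quadratic in `η` (the second because `h₁ = ∂_r h`),
so this only has to be checked for `η` on the unit sphere; there `Y × sphere` is compact and
`h(0, y, η) > 0`, so by continuity it holds uniformly for `r` near `0`. -/

theorem HasDerivAt.mul_comp_inner {f g : ℝ → ℝ} {f' g' x : ℝ} (hg : HasDerivAt g g' x)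
    (hf : HasDerivAt f f' (g x)) :
    HasDerivAt (fun a => g a * f (g a)) (g' * (f (g x) + g x * f')) x :=
  (hg.mul (hf.comp x hg)).congr_deriv (by rw [Function.comp_apply]; ring)

theorem deriv_sub_mul_mul_comp_add {f : ℝ → ℝ} {f' x t : ℝ} (hf : HasDerivAt f f' (x * t))
    (k : ℝ) :
    deriv (fun a => k - a * t * f (a * t)) x + deriv (fun b => k - x * b * f (x * b)) t =
      -((x + t) * (f (x * t) + x * t * f')) := by
  have hx := (hasDerivAt_mul_const t).mul_comp_inner hf
  have ht := ((hasDerivAt_id t).const_mul x).mul_comp_inner (by simpa using hf)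
  simp only [id, mul_one] at ht
  rw [deriv_const_sub, deriv_const_sub, hx.deriv, ht.deriv]
  ring

theorem nonneg_of_nonneg_on_unitSphere {E : Type*} [NormedAddCommGroup E] [NormedSpace ℝ E]
    {g : E → ℝ} (hg : ∀ (c : ℝ) η, g (c • η) = c ^ 2 * g η)
    (hS : ∀ w ∈ Metric.sphere (0 : E) 1, 0 ≤ g w) (η : E) : 0 ≤ g η := by
  rcases eq_or_ne η 0 with rfl | hη
  · exact (by simpa using hg 0 0 : g 0 = 0).ge
  · have hnorm : 0 < ‖η‖ := norm_pos_iff.mpr hη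
    have hw : ‖η‖⁻¹ • η ∈ Metric.sphere (0 : E) 1 := by
      simp [norm_smul, hnorm.ne']
    have hη_eq : η = ‖η‖ • ‖η‖⁻¹ • η := by
      rw [smul_smul, mul_inv_cancel₀ hnorm.ne', one_smul]
    rw [hη_eq, hg]
    exact mul_nonneg (sq_nonneg _) (hS _ hw)

theorem smul_eq_sq_mul_of_hasDerivAt {Y E : Type*} [SMul ℝ E]
    {h h₁ : ℝ → Y → E → ℝ} (hhom : ∀ r y (c : ℝ) η, h r y (c • η) = c ^ 2 * h r y η)
    (hder : ∀ r y η, HasDerivAt (fun ρ => h ρ y η) (h₁ r y η) r) (r : ℝ) (y : Y) (c : ℝ)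
    (η : E) : h₁ r y (c • η) = c ^ 2 * h₁ r y η := by
  have hscaled : HasDerivAt (fun ρ => h ρ y (c • η)) (c ^ 2 * h₁ r y η) r := by
    simpa only [hhom] using (hder r y η).const_mul (c ^ 2)
  exact (hder r y (c • η)).unique hscaled

theorem IsCompact.eventually_forall_pos {X Z : Type*} [TopologicalSpace X]
    [TopologicalSpace Z] {K : Set Z} (hK : IsCompact K) {F : X × Z → ℝ} (hF : Continuous F)
    {x₀ : X} (hpos : ∀ z ∈ K, 0 < F (x₀, z)) : ∀ᶠ x in 𝓝 x₀, ∀ z ∈ K, 0 < F (x, z) :=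
  hK.eventually_forall_of_forall_eventually fun z hz =>
    hF.continuousAt.eventually (lt_mem_nhds (hpos z hz))

theorem exists_Icc_mul_of_eventually {P : ℝ → Prop} (hP : ∀ᶠ r in 𝓝 0, P r) :
    ∃ ε > (0 : ℝ), ∀ x ∈ Icc (0 : ℝ) ε, ∀ t ∈ Icc (0 : ℝ) ε, P (x * t) := by
  obtain ⟨δ, hδ, hball⟩ := Metric.eventually_nhds_iff.mp hP
  refine ⟨min (δ / 2) 1, by positivity, fun x hx t ht => hball ?_⟩
  have hx' : x ≤ δ / 2 := hx.2.trans (min_le_left _ _)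
  have ht' : t ≤ 1 := ht.2.trans (min_le_right _ _)
  rw [Real.dist_0_eq_abs, abs_of_nonneg (mul_nonneg hx.1 ht.1)]
  nlinarith [hx.1, ht.1]

theorem stmt14_general {Y : Type*} [TopologicalSpace Y] [CompactSpace Y] {n : ℕ}
    (h h₁ : ℝ → Y → EuclideanSpace ℝ (Fin n) → ℝ)
    (hcont : Continuous fun q : ℝ × Y × EuclideanSpace ℝ (Fin n) => h q.1 q.2.1 q.2.2)
    (hcont1 : Continuous fun q : ℝ × Y × EuclideanSpace ℝ (Fin n) => h₁ q.1 q.2.1 q.2.2)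
    (hhom : ∀ r y (c : ℝ) η, h r y (c • η) = c ^ 2 * h r y η)
    (hpos : ∀ r y η, η ≠ 0 → 0 < h r y η)
    (hder : ∀ r y η, HasDerivAt (fun ρ => h ρ y η) (h₁ r y η) r) :
    (∀ (x' t' : ℝ) (y : Y) (η : EuclideanSpace ℝ (Fin n)) (ξ τ : ℝ),
      deriv (fun a : ℝ => -(ξ * τ) - a * t' * h (a * t') y η) x' +
        deriv (fun b : ℝ => -(ξ * τ) - x' * b * h (x' * b) y η) t' =
      -((x' + t') * (h (x' * t') y η + x' * t' * h₁ (x' * t') y η))) ∧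
    (∃ ε > (0 : ℝ), ∀ x' ∈ Icc (0 : ℝ) ε, ∀ t' ∈ Icc (0 : ℝ) ε,
      ∀ (y : Y) (η : EuclideanSpace ℝ (Fin n)),
        -((x' + t') *
            (-((x' + t') * (h (x' * t') y η + x' * t' * h₁ (x' * t') y η)))) ≥
          (1 / 2) * (x' + t') ^ 2 * h (x' * t') y η) := by
  refine ⟨fun x' t' y η ξ τ => deriv_sub_mul_mul_comp_add (hder _ y η) _, ?_⟩
  have hsphere : ∀ᶠ r in 𝓝 (0 : ℝ), ∀ q ∈ (univ : Set Y) ×ˢ Metric.sphere 0 1,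
      0 < h r q.1 q.2 + 2 * r * h₁ r q.1 q.2 :=
    (isCompact_univ.prod (isCompact_sphere 0 1)).eventually_forall_pos
      (hcont.add ((continuous_const.mul continuous_fst).mul hcont1)) fun q hq => by
        simpa using hpos 0 q.1 q.2 (ne_zero_of_mem_unit_sphere ⟨q.2, hq.2⟩)
  have hall : ∀ᶠ r in 𝓝 (0 : ℝ), ∀ y η, 0 ≤ h r y η + 2 * r * h₁ r y η :=
    hsphere.mono fun r hr y => nonneg_of_nonneg_on_unitSphere
      (fun c η => by rw [hhom, smul_eq_sq_mul_of_hasDerivAt hhom hder]; ring)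
      fun w hw => (hr (y, w) ⟨mem_univ y, hw⟩).le
  obtain ⟨ε, hε, hkey⟩ := exists_Icc_mul_of_eventually hall
  refine ⟨ε, hε, fun x' hx' t' ht' y η => ?_⟩
  linear_combination (1 / 2 : ℝ) * mul_nonneg (sq_nonneg (x' + t')) (hkey x' hx' t' ht' y η)

/-- Let `p(x', t', y, ξ, τ, η) = −ξτ − x' t' h(x' t', y, η)` with `h(r, y, ·)` a smooth
family of positive-definite quadratic forms in `η` (with `∂_r h = h₁`), and let
`φ(x', t') = x' + t'`.  Since `H_p φ = −τ − ξ`, one computes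
`H_p² φ = ∂_{x'} p + ∂_{t'} p = −(x' + t')[h(x't', y, η) + x' t' h₁(x't', y, η)]`;
and for `x', t' ≥ 0` in a sufficiently small neighborhood of `0`,
`−φ · H_p² φ ≥ (1/2) φ² h(x't', y, η)`. -/
theorem stmt14 {Y : Type*} [TopologicalSpace Y] [CompactSpace Y] {n : ℕ}
    (h h₁ : ℝ → Y → EuclideanSpace ℝ (Fin n) → ℝ)
    (hcont : Continuous fun q : ℝ × Y × EuclideanSpace ℝ (Fin n) => h q.1 q.2.1 q.2.2)
    (hcont1 : Continuous fun q : ℝ × Y × EuclideanSpace ℝ (Fin n) => h₁ q.1 q.2.1 q.2.2)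
    (hhom : ∀ r y (c : ℝ) η, h r y (c • η) = c ^ 2 * h r y η)
    (hhom1 : ∀ r y (c : ℝ) η, h₁ r y (c • η) = c ^ 2 * h₁ r y η)
    (hpos : ∀ r y η, η ≠ 0 → 0 < h r y η)
    (hder : ∀ r y η, HasDerivAt (fun ρ => h ρ y η) (h₁ r y η) r) :
    (∀ (x' t' : ℝ) (y : Y) (η : EuclideanSpace ℝ (Fin n)) (ξ τ : ℝ),
      deriv (fun a : ℝ => -(ξ * τ) - a * t' * h (a * t') y η) x' +
        deriv (fun b : ℝ => -(ξ * τ) - x' * b * h (x' * b) y η) t' =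
      -((x' + t') * (h (x' * t') y η + x' * t' * h₁ (x' * t') y η))) ∧
    (∃ ε > (0 : ℝ), ∀ x' ∈ Icc (0 : ℝ) ε, ∀ t' ∈ Icc (0 : ℝ) ε,
      ∀ (y : Y) (η : EuclideanSpace ℝ (Fin n)),
        -((x' + t') *
            (-((x' + t') * (h (x' * t') y η + x' * t' * h₁ (x' * t') y η)))) ≥
          (1 / 2) * (x' + t') ^ 2 * h (x' * t') y η) :=
  stmt14_general h h₁ hcont hcont1 hhom hpos hder
end
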